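/- Let p: T → W be a birational morphism of smooth projective surfaces and Δ an A-D-E configuration on T. If Δ is contracted by p, then Δ is of type A_n. Equivalently, no D_4 configuration can be contracted by a birational morphism of smooth projective surfaces. -/

import Mathlib

/-- An abstract smooth complex projective surface: its group of divisors with
intersection pairing, canonical divisor, effective cone, irreducible curves,
arithmetic genus (satisfying adjunction), and cohomology dimensions
`h⁰(D, O_D)`, `h¹(D, O_D)`, `h⁰(D, ω_D)`. -/
structure Surface where
  Div : Type
  grp : AddCommGroup Div
  inter : Div → Div → ℤ
  inter_comm : ∀ A B, inter A B = inter B A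
  inter_add_left : ∀ A B C, inter (A + B) C = inter A C + inter B C
  K : Div
  Eff : Div → Prop
  eff_zero : Eff 0
  eff_add : ∀ {A B}, Eff A → Eff B → Eff (A + B)
  Irr : Div → Prop
  irr_curve : ∀ {A}, Irr A → Eff A ∧ A ≠ 0
  pa : Div → ℤ
  adjunction : ∀ D, 2 * pa D - 2 = inter K D + inter D D
  h0O : Div → ℕ
  h1O : Div → ℕ
  h0ω : Div → ℕ
  pa_def : ∀ D, (1 : ℤ) - pa D = (h0O D : ℤ) - (h1O D : ℤ)
  serre : ∀ D, h0ω D = h1O D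

attribute [instance] Surface.grp

/-- A curve is a nonzero effective divisor. -/
def Surface.Curve (S : Surface) (D : S.Div) : Prop := S.Eff D ∧ D ≠ 0

/-- `D` is 1-connected: it is a curve and every decomposition `D = A + B`
into curves satisfies `A·B ≥ 1`. -/
def Surface.OneConnected (S : Surface) (D : S.Div) : Prop :=
  S.Curve D ∧ ∀ A B : S.Div, S.Curve A → S.Curve B → A + B = D → 1 ≤ S.inter A B

/-- The data of a birational morphism `p : T → W` of smooth projective surfaces,
a composition of `s` blow-ups, recorded on the source surface `S = T`:
the total exceptional divisors `E 1, …, E s` (total transforms of the exceptional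
curves of the blow-ups), the pullback `pK = p*K_W` of the canonical divisor of `W`,
and the predicate `Exc` of being supported on the `p`-exceptional locus
(i.e. contracted by `p` to a finite set of points). -/
structure Blowdown (S : Surface) (s : ℕ) where
  E : Fin s → S.Div
  pK : S.Div
  Exc : S.Div → Prop
  exc_zero : Exc 0
  exc_sub : ∀ {A B}, Exc A → Exc B → Exc (A - B)
  exc_E : ∀ i, Exc (E i)
  exc_comp : ∀ {D Γ}, Exc D → S.Eff D → S.Irr Γ → S.Eff (D - Γ) → Exc Γ
  E_curve : ∀ i, S.Curve (E i)
  K_eq : S.K = pK + ∑ i, E i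
  pK_exc : ∀ {D}, Exc D → S.inter pK D = 0
  EE : ∀ i j, S.inter (E i) (E j) = if i = j then -1 else 0
  negdef : ∀ {D}, Exc D → D ≠ 0 → S.inter D D < 0
  exc_span : ∀ {D}, Exc D → (∀ i, S.inter D (E i) = 0) → D = 0

/-- The dual graph of a configuration of irreducible curves `C i`: vertices are the
curves, and two distinct curves are adjacent when they meet (intersection number 1). -/
def configGraph (S : Surface) {n : ℕ} (C : Fin n → S.Div) : SimpleGraph (Fin n) where
  Adj i j := i ≠ j ∧ S.inter (C i) (C j) = 1
  symm := ⟨fun i j hij => ⟨hij.1.symm, by rw [S.inter_comm]; exact hij.2⟩⟩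
  loopless := ⟨fun i hi => hi.1 rfl⟩

/-- An A-D-E configuration on `S`: a reduced divisor `∑ C i` whose components `C i`
are distinct `-2`-curves (irreducible, `C i² = -2`, `K·C i = 0`), meeting pairwise
transversally in at most one point, whose dual graph is a tree (connected and acyclic)
and whose intersection matrix is negative definite; these conditions characterize the
configurations whose dual graph is a Dynkin diagram of type Aₙ, Dₙ or Eₙ. -/
structure ADEConfig (S : Surface) where
  n : ℕ
  npos : 0 < n
  C : Fin n → S.Div
  irr : ∀ i, S.Irr (C i)
  inj : Function.Injective C
  sq : ∀ i, S.inter (C i) (C i) = -2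
  KC : ∀ i, S.inter S.K (C i) = 0
  int01 : ∀ i j, i ≠ j → S.inter (C i) (C j) = 0 ∨ S.inter (C i) (C j) = 1
  tree : (configGraph S C).IsTree
  negdef : ∀ a : Fin n → ℤ, a ≠ 0 → ∑ i, ∑ j, a i * a j * S.inter (C i) (C j) < 0

/-- The configuration is of type `Aₙ`: its dual graph is a path. -/
def ADEConfig.IsTypeA {S : Surface} (Δ : ADEConfig S) : Prop :=
  ∃ e : Fin Δ.n ≃ Fin Δ.n, ∀ i j : Fin Δ.n,
    (configGraph S Δ.C).Adj (e i) (e j) ↔ ((i : ℕ) + 1 = (j : ℕ) ∨ (j : ℕ) + 1 = (i : ℕ))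


/-! Since `p` is a composition of blow-ups, the `p`-exceptional classes are the integer
combinations of the total exceptional divisors `E₁, …, Eₛ`, on which `Eᵢ·Eⱼ = -δᵢⱼ` and
`K·Eᵢ = -1`. A contracted class `Γ = -∑ cᵢ Eᵢ` with `Γ² = -2` and `K·Γ = 0` therefore has
`∑ cᵢ² = 2` and `∑ cᵢ = 0`, i.e. `Γ = E_a - E_b`. Writing the curves of a contracted
configuration as `E_{f i} - E_{g i}`, nonnegativity of their mutual intersections forces `f`
and `g` to be injective, and two of the curves meet exactly when `f i = g j` or `f j = g i`.
Hence every curve meets at most two others, which excludes `D₄`, and a connected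
configuration is a chain or a cycle; a cycle has `∑ Cᵢ = 0`, which negative definiteness
forbids. -/

theorem Int.exists_eq_single_sub_single {ι : Type*} [Fintype ι] [DecidableEq ι] {c : ι → ℤ}
    (hsum : ∑ i, c i = 0) (hsq : ∑ i, c i ^ 2 = 2) :
    ∃ a b, a ≠ b ∧ c = Pi.single a 1 - Pi.single b 1 := by
  have hsub (t : Finset ι) : ∑ i ∈ t, c i ^ 2 ≤ 2 :=
    hsq ▸ Finset.sum_le_univ_sum_of_nonneg fun i => sq_nonneg (c i)
  have hne : ∃ i ∈ Finset.univ, c i ≠ 0 := by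
    by_contra! h
    simp [h] at hsq
  obtain ⟨a, -, ha⟩ := Finset.exists_pos_of_sum_zero_of_exists_nonzero c hsum hne
  obtain ⟨b, -, hb⟩ : ∃ b ∈ Finset.univ, c b < 0 := by
    have hsum' : ∑ i, -c i = 0 := by simp [hsum]
    simpa using Finset.exists_pos_of_sum_zero_of_exists_nonzero _ hsum'
      (by simpa using hne)
  have hab : a ≠ b := by rintro rfl; omega
  have hpair := hsub {a, b}
  rw [Finset.sum_pair hab] at hpair
  obtain ⟨hca, hcb⟩ : c a = 1 ∧ c b = -1 := by constructor <;> nlinarith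
  refine ⟨a, b, hab, funext fun i => ?_⟩
  rcases eq_or_ne i a with rfl | hia
  · simp [hab, hca]
  rcases eq_or_ne i b with rfl | hib
  · simp [hab.symm, hcb]
  have htriple := hsub {i, a, b}
  rw [Finset.sum_insert (by simp [hia, hib]), Finset.sum_pair hab] at htriple
  simp only [Pi.sub_apply, Pi.single_apply, hia, hib, if_false, sub_zero]
  nlinarith [sq_nonneg (c i)]

theorem Fintype.sum_comp_eq_of_range_subset {ι α M : Type*} [Fintype ι] [AddCommMonoid M]
    {f g : ι → α} (hg : Function.Injective g) (h : Set.range g ⊆ Set.range f) (F : α → M) :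
    ∑ i, F (g i) = ∑ i, F (f i) := by
  choose p hp using fun i => h ⟨i, rfl⟩
  have hp_inj : Function.Injective p := fun i j hij => hg (by rw [← hp, ← hp, hij])
  calc ∑ i, F (g i) = ∑ i, F (f (p i)) := by simp only [hp]
    _ = ∑ i, F (f i) := (Finite.injective_iff_bijective.mp hp_inj).sum_comp (F ∘ f)

section Chain

variable {n : ℕ} {β : Type*} {f g : Fin n → β} {e : ℕ → Fin n} {k : ℕ}

theorem injOn_Iic_of_chain (hf : Function.Injective f) (h₀ : g (e 0) ∉ Set.range f)
    (hchain : ∀ j < k, g (e (j + 1)) = f (e j)) : Set.InjOn e (Set.Iic k) := by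
  have hne_zero : ∀ j < k, e (j + 1) ≠ e 0 := fun j hj h => h₀ ⟨e j, by rw [← hchain j hj, h]⟩
  intro a ha b hb hab
  simp only [Set.mem_Iic] at ha hb
  induction a generalizing b with
  | zero =>
    cases b with
    | zero => rfl
    | succ b => exact absurd hab.symm (hne_zero b hb)
  | succ a ih =>
    cases b with
    | zero => exact absurd hab (hne_zero a ha)
    | succ b =>
      rw [ih (b := b) (hf (by rw [← hchain a ha, ← hchain b hb, hab])) (by omega) (by omega)]

theorem mem_range_of_chain {G : SimpleGraph (Fin n)} (hG : G.Preconnected)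
    (hf : Function.Injective f) (hg : Function.Injective g)
    (hadj : ∀ i j, G.Adj i j ↔ f i = g j ∨ f j = g i) (h₀ : g (e 0) ∉ Set.range f)
    (hk : k + 1 < n) (hchain : ∀ j < k, g (e (j + 1)) = f (e j)) :
    f (e k) ∈ Set.range g := by
  classical
  obtain ⟨v, -, hv⟩ : ∃ v ∈ Finset.univ, v ∉ (Finset.Iic k).image e := by
    apply Finset.exists_mem_notMem_of_card_lt_card
    rw [Finset.card_image_of_injOn (by simpa using injOn_Iic_of_chain hf h₀ hchain)]
    simpa using hk
  obtain ⟨d, -, ⟨j, hj, hdj⟩, hd⟩ := (hG (e 0) v).some.exists_boundary_dart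
    {w | ∃ j ≤ k, e j = w} ⟨0, k.zero_le, rfl⟩ (by simpa using hv)
  simp only [Set.mem_ofPred_eq, not_exists, not_and] at hd
  rcases (hadj _ _).1 d.adj with h | h <;> rw [← hdj] at h
  · rcases hj.lt_or_eq with hj | rfl
    · exact absurd (hg ((hchain j hj).trans h)) (hd (j + 1) hj)
    · exact ⟨d.snd, h.symm⟩
  · cases j with
    | zero => exact absurd ⟨_, h⟩ h₀
    | succ j => exact absurd (hf (h.trans (hchain j hj))).symm (hd j (by omega))

theorem SimpleGraph.Preconnected.exists_iso_pathGraph {G : SimpleGraph (Fin n)}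
    (hG : G.Preconnected) (hf : Function.Injective f) (hg : Function.Injective g)
    (hadj : ∀ i j, G.Adj i j ↔ f i = g j ∨ f j = g i) {i₀ : Fin n}
    (hi₀ : g i₀ ∉ Set.range f) : Nonempty (SimpleGraph.pathGraph n ≃g G) := by
  have : Nonempty (Fin n) := ⟨i₀⟩
  -- `invFun g ∘ f` sends a vertex `i` to the vertex `j` with `g j = f i`, when there is one.
  set e : ℕ → Fin n := fun k => (Function.invFun g ∘ f)^[k] i₀ with he
  have h₀ : g (e 0) ∉ Set.range f := hi₀
  have hchain : ∀ k, k < n → ∀ j < k, g (e (j + 1)) = f (e j) := by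
    intro k
    induction k with
    | zero => simp
    | succ k ih =>
      intro hk j hj
      rcases (Nat.lt_succ_iff.mp hj).lt_or_eq with hj | rfl
      · exact ih (by omega) j hj
      · simp only [he, Function.iterate_succ_apply', Function.comp_apply]
        exact Function.invFun_eq (mem_range_of_chain hG hf hg hadj h₀ hk (ih (by omega)))
  have hchain' := hchain (n - 1) (by have := i₀.pos; omega)
  have hinj : ∀ i j : Fin n, e i = e j → (i : ℕ) = j := fun i j h =>
    injOn_Iic_of_chain hf h₀ hchain' (by simp; omega) (by simp; omega) h
  have hsucc : ∀ i j : Fin n, f (e i) = g (e j) ↔ (i : ℕ) + 1 = j := by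
    intro i j
    refine ⟨fun h => ?_, fun h => h ▸ (hchain' i (by omega)).symm⟩
    rcases lt_or_ge ((i : ℕ) + 1) n with hi | hi
    · exact hinj ⟨_, hi⟩ j (hg ((hchain' i (by omega)).trans h))
    · obtain ⟨j, hj⟩ := j
      cases j with
      | zero => exact absurd ⟨_, h⟩ h₀
      | succ j =>
        have := hinj i ⟨j, by omega⟩ (hf (h.trans (hchain' j (by omega))))
        simp only at this
        omega
  refine ⟨⟨Equiv.ofBijective _ (Finite.injective_iff_bijective.mp
    fun i j h => Fin.ext (hinj i j h)), ?_⟩⟩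
  intro i j
  simp only [Equiv.ofBijective_apply, hadj, hsucc, SimpleGraph.pathGraph_adj]

end Chain

namespace Surface

variable {S : Surface}

variable (S) in
def interLeft (D : S.Div) : S.Div →+ ℤ :=
  AddMonoidHom.mk' (S.inter · D) fun A B => S.inter_add_left A B D

theorem inter_zero_left (D : S.Div) : S.inter 0 D = 0 :=
  map_zero (S.interLeft D)

theorem inter_neg_left (A D : S.Div) : S.inter (-A) D = -S.inter A D :=
  map_neg (S.interLeft D) A

theorem inter_sub_left (A B D : S.Div) : S.inter (A - B) D = S.inter A D - S.inter B D :=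
  map_sub (S.interLeft D) A B

theorem inter_sub_right (A B D : S.Div) : S.inter D (A - B) = S.inter D A - S.inter D B := by
  rw [S.inter_comm, inter_sub_left, S.inter_comm A, S.inter_comm B]

theorem inter_zsmul_left (c : ℤ) (A D : S.Div) : S.inter (c • A) D = c * S.inter A D :=
  map_zsmul (S.interLeft D) c A

theorem inter_sum_left {ι : Type*} (t : Finset ι) (F : ι → S.Div) (D : S.Div) :
    S.inter (∑ i ∈ t, F i) D = ∑ i ∈ t, S.inter (F i) D :=
  map_sum (S.interLeft D) F t

theorem inter_sum_right {ι : Type*} (t : Finset ι) (F : ι → S.Div) (D : S.Div) :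
    S.inter D (∑ i ∈ t, F i) = ∑ i ∈ t, S.inter D (F i) := by
  simp only [S.inter_comm D, inter_sum_left]

end Surface

@[simp]
theorem configGraph_adj {S : Surface} {n : ℕ} {C : Fin n → S.Div} {i j : Fin n} :
    (configGraph S C).Adj i j ↔ i ≠ j ∧ S.inter (C i) (C j) = 1 :=
  Iff.rfl

theorem ADEConfig.sum_C_ne_zero {S : Surface} (Δ : ADEConfig S) : ∑ i, Δ.C i ≠ 0 := by
  intro h
  have hne : (fun _ => 1 : Fin Δ.n → ℤ) ≠ 0 := fun h1 => one_ne_zero (congrFun h1 ⟨0, Δ.npos⟩)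
  have := Δ.negdef _ hne
  simp only [one_mul, ← Surface.inter_sum_right, ← Surface.inter_sum_left, h,
    Surface.inter_zero_left] at this
  exact this.false

namespace Blowdown

variable {S : Surface} {s : ℕ} (B : Blowdown S s)

def excSubgroup : AddSubgroup S.Div :=
  AddSubgroup.ofSub {D | B.Exc D} ⟨0, B.exc_zero⟩ fun x hx y hy =>
    sub_eq_add_neg x y ▸ B.exc_sub hx hy

theorem eq_neg_sum_inter_smul_E {D : S.Div} (hD : B.Exc D) :
    D = -∑ i, S.inter D (B.E i) • B.E i := by
  rw [eq_neg_iff_add_eq_zero]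
  apply B.exc_span
  · refine B.excSubgroup.add_mem hD (B.excSubgroup.sum_mem fun i _ => ?_)
    exact B.excSubgroup.zsmul_mem (B.exc_E i) _
  · intro j
    simp [S.inter_add_left, Surface.inter_sum_left, Surface.inter_zsmul_left, B.EE]

theorem exists_eq_E_sub_E {Γ : S.Div} (hΓ : B.Exc Γ) (hsq : S.inter Γ Γ = -2)
    (hK : S.inter S.K Γ = 0) : ∃ a b, a ≠ b ∧ Γ = B.E a - B.E b := by
  have hΓc := B.eq_neg_sum_inter_smul_E hΓ
  have hsum : ∑ i, S.inter Γ (B.E i) = 0 := by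
    rw [B.K_eq, S.inter_add_left, B.pK_exc hΓ, Surface.inter_sum_left] at hK
    simpa [S.inter_comm Γ] using hK
  have hsq' : ∑ i, S.inter Γ (B.E i) ^ 2 = 2 := by
    nth_rw 1 [hΓc] at hsq
    simp only [Surface.inter_neg_left, Surface.inter_sum_left, Surface.inter_zsmul_left,
      S.inter_comm (B.E _) Γ] at hsq
    simp only [sq]
    omega
  obtain ⟨a, b, hab, hc⟩ := Int.exists_eq_single_sub_single hsum hsq'
  refine ⟨b, a, hab.symm, ?_⟩
  rw [hΓc]
  simp only [congrFun hc, Pi.sub_apply, sub_smul, Finset.sum_sub_distrib, Pi.single_apply,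
    ite_smul, one_smul, zero_smul, Finset.sum_ite_eq', Finset.mem_univ, if_true, neg_sub]

theorem inter_E_sub_E (a b c d : Fin s) :
    S.inter (B.E a - B.E b) (B.E c - B.E d) =
      (if a = d then 1 else 0) + (if b = c then 1 else 0) -
        (if a = c then 1 else 0) - (if b = d then 1 else 0) := by
  simp only [Surface.inter_sub_left, Surface.inter_sub_right, B.EE]
  split_ifs <;> omega

theorem ne_and_ne_of_inter_E_sub_E_nonneg {a b c d : Fin s} (hab : a ≠ b) (hcd : c ≠ d)
    (h : 0 ≤ S.inter (B.E a - B.E b) (B.E c - B.E d)) : a ≠ c ∧ b ≠ d := by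
  rw [inter_E_sub_E] at h
  constructor <;> rintro rfl <;> split_ifs at h <;> simp_all

theorem inter_E_sub_E_of_ne {a b c d : Fin s} (hac : a ≠ c) (hbd : b ≠ d) :
    S.inter (B.E a - B.E b) (B.E c - B.E d) =
      (if a = d then 1 else 0) + (if b = c then 1 else 0) := by
  simp [inter_E_sub_E, hac, hbd]

theorem exists_injective_E_sub_E {ι : Type*} {C : ι → S.Div} (hexc : ∀ i, B.Exc (C i))
    (hsq : ∀ i, S.inter (C i) (C i) = -2) (hK : ∀ i, S.inter S.K (C i) = 0)
    (hnonneg : Pairwise fun i j => 0 ≤ S.inter (C i) (C j)) :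
    ∃ f g : ι → Fin s, Function.Injective f ∧ Function.Injective g ∧ (∀ i, f i ≠ g i) ∧
      ∀ i, C i = B.E (f i) - B.E (g i) := by
  choose f g hfg hC using fun i => B.exists_eq_E_sub_E (hexc i) (hsq i) (hK i)
  have hne : Pairwise fun i j => f i ≠ f j ∧ g i ≠ g j := fun i j hij =>
    B.ne_and_ne_of_inter_E_sub_E_nonneg (hfg i) (hfg j) (hC i ▸ hC j ▸ hnonneg hij)
  refine ⟨f, g, fun i j h => ?_, fun i j h => ?_, hfg, hC⟩ <;>
    by_contra hij
  exacts [(hne hij).1 h, (hne hij).2 h]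

theorem isTypeA_of_forall_exc (Δ : ADEConfig S) (hΔ : ∀ i, B.Exc (Δ.C i)) : Δ.IsTypeA := by
  obtain ⟨f, g, hf, hg, hfg, hC⟩ := B.exists_injective_E_sub_E hΔ Δ.sq Δ.KC
    fun i j hij => by rcases Δ.int01 i j hij with h | h <;> simp [h]
  have hadj : ∀ i j, (configGraph S Δ.C).Adj i j ↔ f i = g j ∨ f j = g i := by
    intro i j
    rcases eq_or_ne i j with rfl | hij
    · simp [hfg i]
    · have h01 := Δ.int01 i j hij
      rw [configGraph_adj, hC, hC, B.inter_E_sub_E_of_ne (hf.ne hij) (hg.ne hij)] at *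
      split_ifs at h01 ⊢ <;> simp_all [eq_comm]
  -- If every curve had a predecessor, the configuration would be a cycle, with `∑ Cᵢ = 0`.
  obtain ⟨i₀, hi₀⟩ : ∃ i₀, g i₀ ∉ Set.range f := by
    by_contra! h
    apply Δ.sum_C_ne_zero
    rw [Finset.sum_congr rfl fun i _ => hC i, Finset.sum_sub_distrib,
      Fintype.sum_comp_eq_of_range_subset hg (Set.range_subset_iff.mpr h), sub_self]
  obtain ⟨φ⟩ := Δ.tree.connected.preconnected.exists_iso_pathGraph hf hg hadj hi₀
  exact ⟨φ.toEquiv, fun i j => φ.map_adj_iff.trans SimpleGraph.pathGraph_adj⟩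

theorem not_forall_exc_of_D4 {N : Fin 4 → S.Div} (hsq : ∀ i, S.inter (N i) (N i) = -2)
    (hK : ∀ i, S.inter S.K (N i) = 0)
    (hN : ∀ i j, i ≠ j → S.inter (N i) (N j) = if i = 0 ∨ j = 0 then 1 else 0) :
    ¬ ∀ i, B.Exc (N i) := by
  intro hexc
  obtain ⟨f, g, hf, hg, -, hC⟩ := B.exists_injective_E_sub_E hexc hsq hK
    fun i j hij => show 0 ≤ _ by rw [hN i j hij]; split_ifs <;> norm_num
  have hleg : ∀ k : Fin 3, f 0 = g k.succ ∨ g 0 = f k.succ := by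
    intro k
    have h0k : (0 : Fin 4) ≠ k.succ := (Fin.succ_ne_zero k).symm
    have h := hN 0 k.succ h0k
    rw [if_pos (Or.inl rfl), hC, hC, B.inter_E_sub_E_of_ne (hf.ne h0k) (hg.ne h0k)] at h
    split_ifs at h <;> simp_all
  -- Two of the three legs are attached to `N 0` on the same side.
  obtain ⟨k, l, hkl, hsame⟩ := Fintype.exists_ne_map_eq_of_card_lt
    (fun k : Fin 3 => decide (f 0 = g k.succ)) (by simp)
  have hkl' : k.succ ≠ l.succ := (Fin.succ_injective 3).ne hkl
  by_cases hk : f 0 = g k.succ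
  · have hl : f 0 = g l.succ := by simpa [hk] using hsame
    exact hkl' (hg (hk.symm.trans hl))
  · have hl : ¬ f 0 = g l.succ := by simpa [hk] using hsame
    exact hkl' (hf (((hleg k).resolve_left hk).symm.trans ((hleg l).resolve_left hl)))

end Blowdown

/-- an A-D-E configuration contracted by a birational morphism of
smooth projective surfaces is of type `Aₙ`; equivalently, no `D₄` configuration
(a central `-2`-curve `N₀` meeting three pairwise disjoint `-2`-curves
`N₁, N₂, N₃`) can be contracted. -/
theorem stmt16 (S : Surface) (s : ℕ) (B : Blowdown S s) :
    (∀ Δ : ADEConfig S, (∀ i, B.Exc (Δ.C i)) → Δ.IsTypeA) ∧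
    (∀ N : Fin 4 → S.Div, Function.Injective N →
      (∀ i, S.Irr (N i) ∧ S.inter (N i) (N i) = -2 ∧ S.inter S.K (N i) = 0) →
      (∀ i j, i ≠ j →
        S.inter (N i) (N j) = if i = 0 ∨ j = 0 then 1 else 0) →
      ¬ (∀ i, B.Exc (N i))) :=
  ⟨B.isTypeA_of_forall_exc, fun _ _ hN hNN =>
    B.not_forall_exc_of_D4 (fun i => (hN i).2.1) (fun i => (hN i).2.2) hNN⟩
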